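/- If n = k·p is a (b,P,Q)-challenge pseudoprime with p prime and ε the Jacobi symbol with respect to D = P²-4Q, then the rank of apparition ω(p) divides k - ε(k), and hence p divides U_{k-ε(k)}. -/
import Mathlib

/-- The Lucas sequence `U` with parameters `(P, Q)`. -/
def lucasU (P Q : ℤ) : ℕ → ℤ
  | 0 => 0
  | 1 => 1
  | (n + 2) => P * lucasU P Q (n + 1) - Q * lucasU P Q n

/-- The rank of apparition of `p` for the Lucas sequence with parameters `(P, Q)`. -/
noncomputable def rankApp (P Q : ℤ) (p : ℕ) : ℕ :=
  sInf {m : ℕ | 0 < m ∧ (p : ℤ) ∣ lucasU P Q m}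

/-- A `(b, P, Q)`-challenge pseudoprime. -/
def IsChallengePsp (b : ℕ) (P Q : ℤ) (n : ℕ) : Prop :=
  1 < n ∧ ¬ n.Prime ∧
  Nat.Coprime n b ∧ Int.gcd (n : ℤ) (2 * Q * (P ^ 2 - 4 * Q)) = 1 ∧
  b ^ (n - 1) ≡ 1 [MOD n] ∧
  jacobiSym (P ^ 2 - 4 * Q) n = -1 ∧
  (n : ℤ) ∣ lucasU P Q (n + 1)

@[simp] lemma lucasU_zero (P Q : ℤ) : lucasU P Q 0 = 0 := rfl
@[simp] lemma lucasU_one (P Q : ℤ) : lucasU P Q 1 = 1 := rfl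
lemma lucasU_add_two (P Q : ℤ) (n : ℕ) :
    lucasU P Q (n + 2) = P * lucasU P Q (n + 1) - Q * lucasU P Q n := rfl

lemma lucas_key {R : Type*} [CommRing R] (P Q : ℤ) (A B : R)
    (hs : A + B = 2 * (P : R)) (hm : A * B = 4 * (Q : R)) (m : ℕ) :
    (2 : R) ^ m * ((lucasU P Q m : ℤ) : R) * (A - B) = 2 * (A ^ m - B ^ m) := by
  induction m using Nat.twoStepInduction with
  | zero => simp
  | one => simp
  | more m ih2 ih1 =>
      rw [lucasU_add_two]
      push_cast
      linear_combination (2*(P:R)) * ih1 - (4*(Q:R)) * ih2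
        + (2*B*B^m - 2*A*A^m) * hs + (2*A^m - 2*B^m) * hm

lemma lucasU_add (P Q : ℤ) (n m : ℕ) :
    lucasU P Q (m + n + 1) =
      lucasU P Q (m + 1) * lucasU P Q (n + 1) - Q * lucasU P Q m * lucasU P Q n := by
  induction m using Nat.twoStepInduction with
  | zero => simp
  | one =>
      rw [show 1 + n + 1 = n + 2 by omega, lucasU_add_two]
      have h2 : lucasU P Q (1 + 1) = P := by rw [lucasU_add_two]; simp
      rw [h2]; simp
  | more m ih2 ih1 =>
      rw [show m + 2 + n + 1 = (m + n + 1) + 2 by omega, lucasU_add_two,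
        show m + n + 1 + 1 = (m + 1) + n + 1 by omega, ih1, ih2,
        lucasU_add_two P Q (m + 1), lucasU_add_two P Q m]
      ring

lemma dvd_lucasU_add (P Q : ℤ) (p : ℕ) {a b : ℕ}
    (ha : (p : ℤ) ∣ lucasU P Q a) (hb : (p : ℤ) ∣ lucasU P Q b) :
    (p : ℤ) ∣ lucasU P Q (a + b) := by
  cases a with
  | zero => simpa using hb
  | succ a' =>
      rw [show a' + 1 + b = a' + b + 1 by omega, lucasU_add P Q b a']
      exact dvd_sub (ha.mul_right _) (hb.mul_left _)

lemma rank_mem (P Q : ℤ) (p : ℕ) {N : ℕ} (hN : 0 < N) (hdvd : (p : ℤ) ∣ lucasU P Q N) :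
    0 < rankApp P Q p ∧ (p : ℤ) ∣ lucasU P Q (rankApp P Q p) ∧
      ∀ j, 0 < j → (p : ℤ) ∣ lucasU P Q j → rankApp P Q p ≤ j := by
  have hmem : rankApp P Q p ∈ {m : ℕ | 0 < m ∧ (p : ℤ) ∣ lucasU P Q m} :=
    Nat.sInf_mem ⟨N, hN, hdvd⟩
  exact ⟨hmem.1, hmem.2, fun j hj hd => Nat.sInf_le ⟨hj, hd⟩⟩

lemma lucasU_dvd_of_rank_dvd (P Q : ℤ) (p : ℕ)
    (hω : (p : ℤ) ∣ lucasU P Q (rankApp P Q p)) {m : ℕ}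
    (h : rankApp P Q p ∣ m) : (p : ℤ) ∣ lucasU P Q m := by
  obtain ⟨t, rfl⟩ := h
  induction t with
  | zero => simp
  | succ t ih =>
      rw [Nat.mul_succ]
      exact dvd_lucasU_add P Q p ih hω

lemma rank_dvd_of_dvd (P Q : ℤ) {p : ℕ} (hp : p.Prime) (hQ : ¬ (p : ℤ) ∣ Q)
    (hpos : 0 < rankApp P Q p)
    (hω : (p : ℤ) ∣ lucasU P Q (rankApp P Q p))
    (hmin : ∀ j, 0 < j → (p : ℤ) ∣ lucasU P Q j → rankApp P Q p ≤ j)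
    (m : ℕ) : (p : ℤ) ∣ lucasU P Q m → rankApp P Q p ∣ m := by
  induction m using Nat.strong_induction_on with
  | _ m ih =>
    intro h
    set ω := rankApp P Q p with hωdef
    rcases Nat.lt_or_ge m ω with hlt | hge
    · rcases Nat.eq_zero_or_pos m with rfl | hm
      · simp
      · exact absurd (hmin m hm h) (by omega)
    · have hsplit : m = (ω - 1) + (m - ω) + 1 := by omega
      rw [hsplit, lucasU_add P Q (m - ω) (ω - 1)] at h
      have hω1 : ω - 1 + 1 = ω := by omega
      rw [hω1] at h
      have h2 : (p : ℤ) ∣ Q * lucasU P Q (ω - 1) * lucasU P Q (m - ω) :=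
        (dvd_sub_right (hω.mul_right _)).mp h
      have hpz : Prime (p : ℤ) := Nat.prime_iff_prime_int.mp hp
      rcases (hpz.dvd_mul.mp h2) with h3 | h3
      · rcases hpz.dvd_mul.mp h3 with h4 | h4
        · exact absurd h4 hQ
        · rcases Nat.eq_zero_or_pos (ω - 1) with he | hpos'
          · have : ω = 1 := by omega
            rw [this]; exact one_dvd m
          · exact absurd (hmin _ hpos' h4) (by omega)
      · have := ih (m - ω) (by omega) h3
        have : ω ∣ (m - ω) + ω := this.add (dvd_refl ω)
        rwa [Nat.sub_add_cancel hge] at this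

lemma apparition_pos (P Q : ℤ) (p : ℕ) [hpf : Fact p.Prime] (hp2 : p ≠ 2)
    (hQ : ¬ (p : ℤ) ∣ Q)
    (h1 : legendreSym p (P ^ 2 - 4 * Q) = 1) :
    (p : ℤ) ∣ lucasU P Q (p - 1) := by
  have hp := hpf.out
  have h2 : ((2 : ℕ) : ZMod p) ≠ 0 := by
    rw [Ne, ZMod.natCast_eq_zero_iff]
    intro h
    exact hp2 ((Nat.prime_dvd_prime_iff_eq hp Nat.prime_two).mp h)
  have h2' : (2 : ZMod p) ≠ 0 := by exact_mod_cast h2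
  have hQ' : ((Q : ℤ) : ZMod p) ≠ 0 := by
    rwa [Ne, ZMod.intCast_zmod_eq_zero_iff_dvd]
  have hD0 : ((P ^ 2 - 4 * Q : ℤ) : ZMod p) ≠ 0 := by
    intro h
    rw [(legendreSym.eq_zero_iff p _).mpr h] at h1
    norm_num at h1
  obtain ⟨s, hs⟩ := (legendreSym.eq_one_iff p hD0).mp h1
  set A : ZMod p := (P : ZMod p) + s with hA
  set B : ZMod p := (P : ZMod p) - s with hB
  have hsum : A + B = 2 * ((P : ℤ) : ZMod p) := by push_cast; ring
  have hprod : A * B = 4 * ((Q : ℤ) : ZMod p) := by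
    have : ((P ^ 2 - 4 * Q : ℤ) : ZMod p) = s * s := hs
    rw [hA, hB]
    push_cast at this ⊢
    linear_combination this
  have key := lucas_key P Q A B hsum hprod (p - 1)
  have hs0 : s ≠ 0 := by
    intro h; rw [h, mul_zero] at hs; exact hD0 hs
  have hABne : A * B ≠ 0 := by
    rw [hprod]
    have h4 : (4 : ZMod p) = 2 * 2 := by norm_num
    exact mul_ne_zero (by rw [h4]; exact mul_ne_zero h2' h2') hQ'
  have hAne : A ≠ 0 := fun h => hABne (by rw [h, zero_mul])
  have hBne : B ≠ 0 := fun h => hABne (by rw [h, mul_zero])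
  rw [ZMod.pow_card_sub_one_eq_one hAne, ZMod.pow_card_sub_one_eq_one hBne,
    sub_self, mul_zero] at key
  have hABs : A - B = 2 * s := by rw [hA, hB]; ring
  rw [hABs] at key
  rcases mul_eq_zero.mp key with h | h
  · rcases mul_eq_zero.mp h with h' | h'
    · exact absurd h' (pow_ne_zero _ h2')
    · rwa [ZMod.intCast_zmod_eq_zero_iff_dvd] at h'
  · rcases mul_eq_zero.mp h with h' | h'
    · exact absurd h' h2'
    · exact absurd h' hs0

lemma apparition_neg (P Q : ℤ) (p : ℕ) [hpf : Fact p.Prime] (hp2 : p ≠ 2)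
    (h1 : legendreSym p (P ^ 2 - 4 * Q) = -1) :
    (p : ℤ) ∣ lucasU P Q (p + 1) := by
  have hp := hpf.out
  have hpodd : p % 2 = 1 := by
    obtain ⟨j, hj⟩ := hp.odd_of_ne_two hp2
    omega
  set d : ZMod p := ((P ^ 2 - 4 * Q : ℤ) : ZMod p) with hd
  set f : Polynomial (ZMod p) := Polynomial.X ^ 2 - Polynomial.C d with hf
  have hdeg : f.degree = 2 := by
    rw [hf]; exact Polynomial.degree_X_pow_sub_C (by norm_num) d
  haveI : Nontrivial (AdjoinRoot f) := AdjoinRoot.nontrivial f (by rw [hdeg]; norm_num)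
  haveI : CharP (AdjoinRoot f) p :=
    charP_of_injective_algebraMap (algebraMap (ZMod p) (AdjoinRoot f)).injective p
  set R := AdjoinRoot f
  set t : R := AdjoinRoot.root f with ht
  have ht2 : t ^ 2 = algebraMap (ZMod p) R d := by
    have h0 : AdjoinRoot.mk f f = 0 := AdjoinRoot.mk_self
    rw [hf, map_sub, map_pow, AdjoinRoot.mk_X, AdjoinRoot.mk_C, sub_eq_zero] at h0
    rw [h0, AdjoinRoot.algebraMap_eq]
  have heuler : d ^ (p / 2) = -1 := by
    have h' := legendreSym.eq_pow p (P ^ 2 - 4 * Q)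
    rw [h1] at h'
    rw [hd, ← h']
    norm_num
  have htp : t ^ p = -t := by
    have hpsplit : p = 2 * (p / 2) + 1 := by omega
    calc t ^ p = (t ^ 2) ^ (p / 2) * t := by
          rw [← pow_mul, ← pow_succ, ← hpsplit]
      _ = algebraMap (ZMod p) R (d ^ (p / 2)) * t := by rw [ht2, map_pow]
      _ = -t := by rw [heuler, map_neg, map_one, neg_one_mul]
  set A : R := ((P : ℤ) : R) + t with hA
  set B : R := ((P : ℤ) : R) - t with hB
  have hPc : ((P : ℤ) : R) = algebraMap (ZMod p) R ((P : ℤ) : ZMod p) := by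
    rw [map_intCast]
  have hPp : ((P : ℤ) : R) ^ p = ((P : ℤ) : R) := by
    rw [hPc, ← map_pow, ZMod.pow_card]
  have hsum : A + B = 2 * ((P : ℤ) : R) := by rw [hA, hB]; ring
  have hprod : A * B = 4 * ((Q : ℤ) : R) := by
    have hdR : (algebraMap (ZMod p) R) d = ((P ^ 2 - 4 * Q : ℤ) : R) := by
      rw [hd, map_intCast]
    have : A * B = ((P : ℤ) : R) ^ 2 - t ^ 2 := by rw [hA, hB]; ring
    rw [this, ht2, hdR]; push_cast; ring
  have hAp : A ^ p = B := by
    rw [hA, hB, add_pow_char, htp, hPp]; ring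
  have hBp : B ^ p = A := by
    rw [hA, hB, sub_pow_char, htp, hPp]; ring
  have key := lucas_key P Q A B hsum hprod (p + 1)
  have hzero : (((2 : ℤ) ^ (p + 2) * lucasU P Q (p + 1) : ℤ) : R) * t = 0 := by
    have hA1 : A ^ (p + 1) = A * B := by rw [pow_succ, hAp, mul_comm]
    have hB1 : B ^ (p + 1) = A * B := by rw [pow_succ, hBp]
    rw [hA1, hB1, sub_self, mul_zero] at key
    have hABt : A - B = 2 * t := by rw [hA, hB]; ring
    rw [hABt] at key
    push_cast at key ⊢
    linear_combination key
  have hc : (((2 : ℤ) ^ (p + 2) * lucasU P Q (p + 1) : ℤ) : ZMod p) = 0 := by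
    by_contra hc0
    have hrw : AdjoinRoot.mk f
        (Polynomial.C (((2 : ℤ) ^ (p + 2) * lucasU P Q (p + 1) : ℤ) : ZMod p) * Polynomial.X)
        = (((2 : ℤ) ^ (p + 2) * lucasU P Q (p + 1) : ℤ) : R) * t := by
      rw [map_mul, AdjoinRoot.mk_C, AdjoinRoot.mk_X, ← ht,
        map_intCast (AdjoinRoot.of f)]
    rw [← hrw, AdjoinRoot.mk_eq_zero] at hzero
    have hne : Polynomial.C (((2 : ℤ) ^ (p + 2) * lucasU P Q (p + 1) : ℤ) : ZMod p)
        * Polynomial.X ≠ 0 :=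
      mul_ne_zero (Polynomial.C_ne_zero.mpr hc0) Polynomial.X_ne_zero
    have hle := Polynomial.degree_le_of_dvd hzero hne
    rw [hdeg, Polynomial.degree_C_mul_X hc0] at hle
    norm_num at hle
  haveI : NeZero p := ⟨hp.pos.ne'⟩
  rw [ZMod.intCast_zmod_eq_zero_iff_dvd] at hc
  have hpz : Prime (p : ℤ) := Nat.prime_iff_prime_int.mp hp
  rcases hpz.dvd_mul.mp hc with h | h
  · exfalso
    have h2 : p ∣ 2 := by exact_mod_cast hpz.dvd_of_dvd_pow h
    exact hp2 ((Nat.prime_dvd_prime_iff_eq hp Nat.prime_two).mp h2)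
  · exact h

theorem challenge_psp_rank_divides_preproduct
    (b : ℕ) (P Q : ℤ) (n k p : ℕ) (hp : p.Prime) (hk : 0 < k)
    (D : ℤ) (hD : D = P ^ 2 - 4 * Q)
    (hn : n = k * p)
    (hpsp : IsChallengePsp b P Q n) :
    rankApp P Q p ∣ ((k : ℤ) - jacobiSym D k).toNat ∧
    (p : ℤ) ∣ lucasU P Q (((k : ℤ) - jacobiSym D k).toNat) := by
  subst hD
  obtain ⟨hn1, hnp, hcop, hgcd, hb, hjac, hU⟩ := hpsp
  haveI : Fact p.Prime := ⟨hp⟩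
  have hpn : p ∣ n := hn ▸ Dvd.intro_left k rfl
  have hkn : k ∣ n := hn ▸ Dvd.intro p rfl
  have hcopr : IsCoprime (n : ℤ) (2 * Q * (P ^ 2 - 4 * Q)) :=
    Int.isCoprime_iff_gcd_eq_one.mpr hgcd
  have hpz : Prime (p : ℤ) := Nat.prime_iff_prime_int.mp hp
  have hpQ : ¬ (p : ℤ) ∣ Q := by
    intro h
    exact hpz.not_unit (hcopr.isUnit_of_dvd' (Int.natCast_dvd_natCast.mpr hpn)
      (dvd_mul_of_dvd_left (h.mul_left 2) _))
  have hp2 : p ≠ 2 := by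
    intro h
    apply hpz.not_unit
    refine hcopr.isUnit_of_dvd' (Int.natCast_dvd_natCast.mpr hpn) ?_
    rw [h]
    exact dvd_mul_of_dvd_left (dvd_mul_right 2 Q) _
  have hk2 : 2 ≤ k := by
    by_contra h
    have hk1 : k = 1 := by omega
    rw [hk1, one_mul] at hn
    exact hnp (hn ▸ hp)
  haveI : NeZero k := ⟨by omega⟩
  haveI : NeZero p := ⟨hp.pos.ne'⟩
  -- coprimality of k with D
  have hkD : (P ^ 2 - 4 * Q).gcd (k : ℤ) = 1 := by
    have h1 : IsCoprime ((k : ℤ)) (2 * Q * (P ^ 2 - 4 * Q)) :=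
      hcopr.of_isCoprime_of_dvd_left (Int.natCast_dvd_natCast.mpr hkn)
    have h2 : IsCoprime ((k : ℤ)) (P ^ 2 - 4 * Q) :=
      h1.of_isCoprime_of_dvd_right (dvd_mul_left _ _)
    exact Int.isCoprime_iff_gcd_eq_one.mp h2.symm
  have hmul : jacobiSym (P ^ 2 - 4 * Q) k * jacobiSym (P ^ 2 - 4 * Q) p = -1 := by
    rw [← jacobiSym.mul_right, ← hn]; exact hjac
  have hleg : legendreSym p (P ^ 2 - 4 * Q) = jacobiSym (P ^ 2 - 4 * Q) p :=
    jacobiSym.legendreSym.to_jacobiSym p _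
  -- rank setup
  have hUp : (p : ℤ) ∣ lucasU P Q (n + 1) :=
    dvd_trans (Int.natCast_dvd_natCast.mpr hpn) hU
  obtain ⟨hωpos, hωdvd, hmin⟩ := rank_mem P Q p (Nat.succ_pos n) hUp
  have hrankn : rankApp P Q p ∣ n + 1 :=
    rank_dvd_of_dvd P Q hp hpQ hωpos hωdvd hmin (n + 1) hUp
  set ω := rankApp P Q p with hω
  have c1 : (ω : ℤ) ∣ (k : ℤ) * (p : ℤ) + 1 := by
    have := Int.natCast_dvd_natCast.mpr hrankn
    push_cast at this
    rw [hn] at this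
    push_cast at this
    convert this using 1
  rcases jacobiSym.eq_one_or_neg_one hkD with hek | hek
  · -- ε(k) = 1, ε(p) = -1
    have hep : jacobiSym (P ^ 2 - 4 * Q) p = -1 := by
      rw [hek, one_mul] at hmul; exact hmul
    have happ : (p : ℤ) ∣ lucasU P Q (p + 1) :=
      apparition_neg P Q p hp2 (hleg.trans hep)
    have hωp : ω ∣ p + 1 := rank_dvd_of_dvd P Q hp hpQ hωpos hωdvd hmin (p + 1) happ
    have c2 : (ω : ℤ) ∣ (k : ℤ) * ((p : ℤ) + 1) := by
      have := Int.natCast_dvd_natCast.mpr hωp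
      push_cast at this
      exact this.mul_left _
    have c3 : (ω : ℤ) ∣ (k : ℤ) - 1 := by
      have := dvd_sub c2 c1
      have he : (k : ℤ) * ((p : ℤ) + 1) - ((k : ℤ) * (p : ℤ) + 1) = (k : ℤ) - 1 := by ring
      rwa [he] at this
    rw [hek]
    have htn : ((k : ℤ) - 1).toNat = k - 1 := by omega
    rw [htn]
    have hfin : ω ∣ k - 1 := by
      have : ((k - 1 : ℕ) : ℤ) = (k : ℤ) - 1 := by omega
      exact_mod_cast (this ▸ c3 : (ω : ℤ) ∣ ((k - 1 : ℕ) : ℤ))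
    exact ⟨hfin, lucasU_dvd_of_rank_dvd P Q p hωdvd hfin⟩
  · -- ε(k) = -1, ε(p) = 1
    have hep : jacobiSym (P ^ 2 - 4 * Q) p = 1 := by
      rw [hek] at hmul
      nlinarith [hmul]
    have happ : (p : ℤ) ∣ lucasU P Q (p - 1) :=
      apparition_pos P Q p hp2 hpQ (hleg.trans hep)
    have hωp : ω ∣ p - 1 := rank_dvd_of_dvd P Q hp hpQ hωpos hωdvd hmin (p - 1) happ
    have c2 : (ω : ℤ) ∣ (k : ℤ) * ((p : ℤ) - 1) := by
      have := Int.natCast_dvd_natCast.mpr hωp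
      have hcast : ((p - 1 : ℕ) : ℤ) = (p : ℤ) - 1 := by
        have := hp.pos; omega
      rw [hcast] at this
      exact this.mul_left _
    have c3 : (ω : ℤ) ∣ (k : ℤ) + 1 := by
      have := dvd_sub c1 c2
      have he : ((k : ℤ) * (p : ℤ) + 1) - (k : ℤ) * ((p : ℤ) - 1) = (k : ℤ) + 1 := by ring
      rwa [he] at this
    rw [hek]
    have htn : ((k : ℤ) - (-1)).toNat = k + 1 := by omega
    rw [htn]
    have hfin : ω ∣ k + 1 := by
      have : ((k + 1 : ℕ) : ℤ) = (k : ℤ) + 1 := by omega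
      exact_mod_cast (this ▸ c3 : (ω : ℤ) ∣ ((k + 1 : ℕ) : ℤ))
    exact ⟨hfin, lucasU_dvd_of_rank_dvd P Q p hωdvd hfin⟩
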